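/- arXiv:math/0612074 — 3 statements merged into one kernel-verified Lean document; each statement's English description precedes it below -/
import Mathlib

section
/- Let S be a finite set, μ a probability measure on S with full support, and H : S → [0,∞). For t ≥ 0 define μ_t(x) = e^{-tH(x)} μ(x) / Z_t where Z_t = Σ_{x∈S} e^{-tH(x)} μ(x). Then for all s, t ≥ 0 and all x ∈ S, |log(μ_s(x)/μ_t(x))| ≤ osc(H) · |s - t|, where osc(H) = max_S H - min_S H. -/
theorem stmt0_aux {S : Type*} [Fintype S] [Nonempty S]
    (μ H : S → ℝ) (hμ : ∀ x, 0 < μ x)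
    (Z : ℝ → ℝ) (hZ : ∀ t, Z t = ∑ x, Real.exp (-t * H x) * μ x)
    (μt : ℝ → S → ℝ) (hμt : ∀ t x, μt t x = Real.exp (-t * H x) * μ x / Z t)
    (s t : ℝ) (hst : s ≤ t) (x : S) :
    |Real.log (μt s x / μt t x)| ≤
      (Finset.univ.sup' Finset.univ_nonempty H
        - Finset.univ.inf' Finset.univ_nonempty H) * |s - t| := by
  set M := Finset.univ.sup' Finset.univ_nonempty H with hM
  set m := Finset.univ.inf' Finset.univ_nonempty H with hm
  have hZpos : ∀ u, 0 < Z u := by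
    intro u
    rw [hZ]
    exact Finset.sum_pos (fun y _ => mul_pos (Real.exp_pos _) (hμ y)) Finset.univ_nonempty
  have hHle : ∀ y, H y ≤ M := fun y => Finset.le_sup' H (Finset.mem_univ y)
  have hHge : ∀ y, m ≤ H y := fun y => Finset.inf'_le H (Finset.mem_univ y)
  have hc : 0 ≤ t - s := sub_nonneg.mpr hst
  have hupper : Z t ≤ Real.exp (-(t - s) * m) * Z s := by
    rw [hZ, hZ, Finset.mul_sum]
    refine Finset.sum_le_sum fun y _ => ?_
    rw [← mul_assoc, ← Real.exp_add]
    refine mul_le_mul_of_nonneg_right (Real.exp_le_exp.mpr ?_) (hμ y).le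
    nlinarith [hHge y]
  have hlower : Real.exp (-(t - s) * M) * Z s ≤ Z t := by
    rw [hZ, hZ, Finset.mul_sum]
    refine Finset.sum_le_sum fun y _ => ?_
    rw [← mul_assoc, ← Real.exp_add]
    refine mul_le_mul_of_nonneg_right (Real.exp_le_exp.mpr ?_) (hμ y).le
    nlinarith [hHle y]
  have hlogU : Real.log (Z t) - Real.log (Z s) ≤ -(t - s) * m := by
    have h1 : Real.log (Z t) ≤ Real.log (Real.exp (-(t - s) * m) * Z s) :=
      Real.log_le_log (hZpos t) hupper
    rw [Real.log_mul (Real.exp_ne_zero _) (hZpos s).ne', Real.log_exp] at h1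
    linarith
  have hlogL : -(t - s) * M ≤ Real.log (Z t) - Real.log (Z s) := by
    have h1 : Real.log (Real.exp (-(t - s) * M) * Z s) ≤ Real.log (Z t) :=
      Real.log_le_log (mul_pos (Real.exp_pos _) (hZpos s)) hlower
    rw [Real.log_mul (Real.exp_ne_zero _) (hZpos s).ne', Real.log_exp] at h1
    linarith
  have hkey : Real.log (μt s x / μt t x)
      = (t - s) * H x + (Real.log (Z t) - Real.log (Z s)) := by
    have hpos : ∀ u, 0 < μt u x := fun u => by
      rw [hμt]; exact div_pos (mul_pos (Real.exp_pos _) (hμ x)) (hZpos u)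
    rw [Real.log_div (hpos s).ne' (hpos t).ne', hμt, hμt,
      Real.log_div (mul_pos (Real.exp_pos _) (hμ x)).ne' (hZpos s).ne',
      Real.log_div (mul_pos (Real.exp_pos _) (hμ x)).ne' (hZpos t).ne',
      Real.log_mul (Real.exp_ne_zero _) (hμ x).ne',
      Real.log_mul (Real.exp_ne_zero _) (hμ x).ne',
      Real.log_exp, Real.log_exp]
    ring
  rw [hkey, abs_sub_comm, abs_of_nonneg hc, abs_le]
  constructor <;> nlinarith [hHle x, hHge x]

/-- uniform control of the log relative density along the
exponential family `μ_t(x) = e^{-tH(x)} μ(x) / Z_t`. -/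
theorem stmt0 {S : Type*} [Fintype S] [Nonempty S]
    (μ H : S → ℝ) (hμ : ∀ x, 0 < μ x) (hsum : ∑ x, μ x = 1)
    (hH : ∀ x, 0 ≤ H x)
    (Z : ℝ → ℝ) (hZ : ∀ t, Z t = ∑ x, Real.exp (-t * H x) * μ x)
    (μt : ℝ → S → ℝ) (hμt : ∀ t x, μt t x = Real.exp (-t * H x) * μ x / Z t)
    (s t : ℝ) (hs : 0 ≤ s) (ht : 0 ≤ t) (x : S) :
    |Real.log (μt s x / μt t x)| ≤
      (Finset.univ.sup' Finset.univ_nonempty H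
        - Finset.univ.inf' Finset.univ_nonempty H) * |s - t| := by
  rcases le_total s t with h | h
  · exact stmt0_aux μ H hμ Z hZ μt hμt s t h x
  · have key := stmt0_aux μ H hμ Z hZ μt hμt t s h x
    have h2 : Real.log (μt s x / μt t x) = - Real.log (μt t x / μt s x) := by
      rw [← Real.log_inv, inv_div]
    rw [h2, abs_neg, abs_sub_comm]
    exact key
end

section
/- Let ε : [β₀, β₁] → (0,∞) be differentiable and δ > 0, σ ≥ 0, C > 0, A ≥ 0, M : [β₀,β₁] → ℝ continuous, and suppose the differential inequality (d/dt) log ε_t ≤ -(2M_t - A)/C + 2σ·ε_t^{1/2} holds on (β₀,β₁). If ε_{β₀} < ε* and M_t > A/2 + C·σ·ε_{β₀}^{1/2} for all t ∈ (β₀,β₁), then t ↦ ε_t is strictly decreasing on [β₀,β₁]. -/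
/-!
Put `b = ε β₀`. Since `M t - A/2 > C σ √b`, the hypothesis gives
`ε' < 2 σ ε (√ε - √b)` on the open interval. So `ε` cannot rise above `b`: while `ε > b`
one has `ε' ≤ L (ε - b)` for a constant `L` coming from an upper bound of `ε`, and a
Grönwall argument started at the last time where `ε ≤ b` keeps `ε - b ≤ 0`. Once `ε ≤ b`
everywhere, the same inequality gives `ε' < 0` on the open interval.
-/

open Set Real

theorem nonpos_of_hasDerivAt_le_mul_self {f f' : ℝ → ℝ} {a b L : ℝ}
    (hf : ContinuousOn f (Icc a b)) (hf' : ∀ x ∈ Ioo a b, HasDerivAt f (f' x) x)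
    (ha : f a ≤ 0) (hbound : ∀ x ∈ Ioo a b, 0 < f x → f' x ≤ L * f x) :
    ∀ x ∈ Icc a b, f x ≤ 0 := by
  intro u hu
  by_contra! hfu
  have hS : IsCompact (Icc a u ∩ f ⁻¹' Iic 0) :=
    isCompact_Icc.of_isClosed_subset
      ((hf.mono (Icc_subset_Icc_right hu.2)).preimage_isClosed_of_isClosed isClosed_Icc
        isClosed_Iic) inter_subset_left
  obtain ⟨c, ⟨⟨hac, hcu⟩, hfc : f c ≤ 0⟩, hc_last⟩ :=
    hS.exists_isGreatest ⟨a, ⟨le_rfl, hu.1⟩, ha⟩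
  have hpos_after : ∀ t ∈ Ioc c u, 0 < f t := fun t ht => by
    by_contra! h
    exact (hc_last ⟨⟨hac.trans ht.1.le, ht.2⟩, h⟩).not_gt ht.1
  have hIoo : Ioo c u ⊆ Ioo a b := Ioo_subset_Ioo hac hu.2
  -- `t ↦ exp (-(L t)) f t` is antitone on `[c, u]`, yet it is `≤ 0` at `c` and `> 0` at `u`.
  have hanti : AntitoneOn (fun t => exp (-(L * t)) * f t) (Icc c u) := by
    refine antitoneOn_of_hasDerivWithinAt_nonpos
      (f' := fun t => exp (-(L * t)) * (f' t - L * f t)) (convex_Icc c u)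
      ((continuous_exp.comp (continuous_const.mul continuous_id).neg).continuousOn.mul
        (hf.mono (Icc_subset_Icc hac hu.2))) (fun t ht => ?_) (fun t ht => ?_)
    all_goals rw [interior_Icc] at ht
    · have hexp : HasDerivAt (fun t => exp (-(L * t))) (exp (-(L * t)) * -L) t := by
        simpa using ((hasDerivAt_id t).const_mul L).neg.exp
      exact ((hexp.mul (hf' t (hIoo ht))).congr_deriv (by ring)).hasDerivWithinAt
    · exact mul_nonpos_of_nonneg_of_nonpos (exp_pos _).le
        (sub_nonpos.2 (hbound t (hIoo ht) (hpos_after t (Ioo_subset_Ioc_self ht))))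
  have hgc : exp (-(L * c)) * f c ≤ 0 := mul_nonpos_of_nonneg_of_nonpos (exp_pos _).le hfc
  have hgu : 0 < exp (-(L * u)) * f u := mul_pos (exp_pos _) hfu
  exact (hgc.trans_lt hgu).not_ge (hanti ⟨le_rfl, hcu⟩ ⟨hcu, le_rfl⟩ hcu)

theorem mul_sqrt_sub_sqrt_le {b e B : ℝ} (hb : 0 ≤ b) (hbe : b ≤ e) (heB : e ≤ B) :
    e * (√e - √b) ≤ √B * (e - b) := by
  have hsb := sq_sqrt hb
  have hse := sq_sqrt (hb.trans hbe)
  have hb_e := sqrt_le_sqrt hbe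
  have he_B := sqrt_le_sqrt heB
  nlinarith [sqrt_nonneg b, mul_nonneg (sqrt_nonneg e) (sub_nonneg.2 hb_e),
    mul_nonneg (sub_nonneg.2 he_B) (sub_nonneg.2 hbe)]

theorem lt_two_mul_mul_sqrt_sub_sqrt {e e' m A C σ b : ℝ} (he : 0 < e) (hC : 0 < C)
    (h : e' / e ≤ -(2 * m - A) / C + 2 * σ * √e) (hm : A / 2 + C * σ * √b < m) :
    e' < 2 * σ * (e * (√e - √b)) := by
  have hmargin : -(2 * m - A) / C < -(2 * σ * √b) := by
    rw [div_lt_iff₀ hC]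
    linarith
  have : e' / e < 2 * σ * (√e - √b) := by linarith
  rw [div_lt_iff₀ he] at this
  linarith

theorem stmt11_general (β₀ β₁ : ℝ)
    (ε ε' M : ℝ → ℝ) (A C σ : ℝ)
    (hC : 0 < C) (hσ : 0 ≤ σ)
    (hpos : ∀ t ∈ Set.Icc β₀ β₁, 0 < ε t)
    (hderiv : ∀ t ∈ Set.Icc β₀ β₁, HasDerivAt ε (ε' t) t)
    (hineq : ∀ t ∈ Set.Ioo β₀ β₁,
      ε' t / ε t ≤ -(2 * M t - A) / C + 2 * σ * Real.sqrt (ε t))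
    (hM : ∀ t ∈ Set.Ioo β₀ β₁, A / 2 + C * σ * Real.sqrt (ε β₀) < M t) :
    StrictAntiOn ε (Set.Icc β₀ β₁) := by
  set b := ε β₀
  have hcont : ContinuousOn ε (Icc β₀ β₁) := fun t ht =>
    (hderiv t ht).continuousAt.continuousWithinAt
  have hslope : ∀ t ∈ Ioo β₀ β₁, ε' t < 2 * σ * (ε t * (√(ε t) - √b)) := fun t ht =>
    lt_two_mul_mul_sqrt_sub_sqrt (hpos t (Ioo_subset_Icc_self ht)) hC (hineq t ht) (hM t ht)
  obtain ⟨B, hB⟩ := isCompact_Icc.bddAbove_image hcont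
  have hle_b : ∀ t ∈ Icc β₀ β₁, ε t - b ≤ 0 :=
    nonpos_of_hasDerivAt_le_mul_self (L := 2 * σ * √B) (hcont.sub continuousOn_const)
      (fun t ht => (hderiv t (Ioo_subset_Icc_self ht)).sub_const b) (sub_self b).le
      fun t ht hbt => calc
        ε' t ≤ 2 * σ * (ε t * (√(ε t) - √b)) := (hslope t ht).le
        _ ≤ 2 * σ * (√B * (ε t - b)) := by
          have hβ₀ : β₀ ∈ Icc β₀ β₁ := ⟨le_rfl, ht.1.le.trans ht.2.le⟩
          have hεB := hB (mem_image_of_mem ε (Ioo_subset_Icc_self ht))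
          exact mul_le_mul_of_nonneg_left
            (mul_sqrt_sub_sqrt_le (hpos β₀ hβ₀).le (sub_pos.1 hbt).le hεB) (by positivity)
        _ = 2 * σ * √B * (ε t - b) := by ring
  refine strictAntiOn_of_hasDerivWithinAt_neg (convex_Icc β₀ β₁) hcont
    (fun t ht => (hderiv t (interior_subset ht)).hasDerivWithinAt) fun t ht => ?_
  rw [interior_Icc] at ht
  have hεt := hpos t (Ioo_subset_Icc_self ht)
  have hsqrt : √(ε t) ≤ √b := sqrt_le_sqrt (sub_nonpos.1 (hle_b t (Ioo_subset_Icc_self ht)))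
  have : 2 * σ * (ε t * (√(ε t) - √b)) ≤ 0 :=
    mul_nonpos_of_nonneg_of_nonpos (by positivity)
      (mul_nonpos_of_nonneg_of_nonpos hεt.le (sub_nonpos.2 hsqrt))
  exact (hslope t ht).trans_le this

/-- stability of the error under global estimates; the error
is strictly decreasing. -/
theorem stmt11 (β₀ β₁ : ℝ) (hβ : β₀ < β₁)
    (ε ε' M : ℝ → ℝ) (A C σ : ℝ)
    (hA : 0 ≤ A) (hC : 0 < C) (hσ : 0 ≤ σ)
    (hpos : ∀ t ∈ Set.Icc β₀ β₁, 0 < ε t)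
    (hderiv : ∀ t ∈ Set.Icc β₀ β₁, HasDerivAt ε (ε' t) t)
    (hMcont : ContinuousOn M (Set.Icc β₀ β₁))
    (hineq : ∀ t ∈ Set.Ioo β₀ β₁,
      ε' t / ε t ≤ -(2 * M t - A) / C + 2 * σ * Real.sqrt (ε t))
    (hM : ∀ t ∈ Set.Ioo β₀ β₁, A / 2 + C * σ * Real.sqrt (ε β₀) < M t) :
    StrictAntiOn ε (Set.Icc β₀ β₁) :=
  stmt11_general β₀ β₁ ε ε' M A C σ hC hσ hpos hderiv hineq hM
end

section
/- Let μ be a probability measure on a finite set S partitioned into sets S^i with μ(S^i) > 0, f : S → ℝ with E_μ[f] = 0 and E_μ[f²] = ε, and let h : I → ℝ with Σ_i μ(S^i)h(i) = 0. Then Σ_i μ(S^i)·h(i)·E^i[-f²/2 + f·ε] ≤ ε·(1+√ε)²·max_i h⁻(i), where h⁻ = max(-h,0) and E^i denotes expectation under μ(·|S^i). -/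
/-- bound on `Σ_i μ(Sⁱ) h(i) Eⁱ[-f²/2 + fε]` by
`ε (1+√ε)² max h⁻`. -/
theorem stmt14 {S I : Type*} [Fintype S] [Nonempty S] [Fintype I] [Nonempty I]
    [DecidableEq I]
    (μ : S → ℝ) (hμ : ∀ x, 0 < μ x) (hsum : ∑ x, μ x = 1)
    (p : S → I)
    (hSi : ∀ i, 0 < ∑ x ∈ Finset.univ.filter (fun x => p x = i), μ x)
    (f : S → ℝ) (hf : ∑ x, f x * μ x = 0)
    (ε : ℝ) (hε : ∑ x, (f x) ^ 2 * μ x = ε)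
    (h : I → ℝ)
    (hh : ∑ i, (∑ x ∈ Finset.univ.filter (fun x => p x = i), μ x) * h i = 0) :
    ∑ i, (∑ x ∈ Finset.univ.filter (fun x => p x = i), μ x) * h i *
      ((∑ x ∈ Finset.univ.filter (fun x => p x = i),
          (-(f x) ^ 2 / 2 + f x * ε) * μ x) /
        (∑ x ∈ Finset.univ.filter (fun x => p x = i), μ x)) ≤
      ε * (1 + Real.sqrt ε) ^ 2 *
        Finset.univ.sup' Finset.univ_nonempty (fun i => max (-h i) 0) := by
  set H := Finset.univ.sup' Finset.univ_nonempty (fun i => max (-h i) 0) with hH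
  -- basic facts
  have hε0 : 0 ≤ ε := by
    rw [← hε]
    exact Finset.sum_nonneg fun x _ => mul_nonneg (sq_nonneg _) (hμ x).le
  obtain ⟨i₀⟩ := (inferInstance : Nonempty I)
  have hH0 : 0 ≤ H := le_trans (le_max_right (-h i₀) 0)
    (Finset.le_sup' (fun i => max (-h i) 0) (Finset.mem_univ i₀))
  have hHle : ∀ i, max (-h i) 0 ≤ H := fun i =>
    Finset.le_sup' (fun i => max (-h i) 0) (Finset.mem_univ i)
  -- a general fiberwise summation fact
  have fib : ∀ F : S → ℝ,
      ∑ i, ∑ x ∈ Finset.univ.filter (fun x => p x = i), F x = ∑ x, F x := by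
    intro F
    rw [Finset.sum_fiberwise_eq_sum_filter Finset.univ Finset.univ p F]
    simp
  -- rewrite LHS as a sum over S
  have hLHS : ∑ i, (∑ x ∈ Finset.univ.filter (fun x => p x = i), μ x) * h i *
      ((∑ x ∈ Finset.univ.filter (fun x => p x = i),
          (-(f x) ^ 2 / 2 + f x * ε) * μ x) /
        (∑ x ∈ Finset.univ.filter (fun x => p x = i), μ x)) =
      ∑ x, h (p x) * ((-(f x) ^ 2 / 2 + f x * ε) * μ x) := by
    rw [← fib (fun x => h (p x) * ((-(f x) ^ 2 / 2 + f x * ε) * μ x))]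
    refine Finset.sum_congr rfl fun i _ => ?_
    have hMi := (hSi i).ne'
    rw [Finset.sum_congr rfl (fun x hx => by
      rw [(Finset.mem_filter.1 hx).2] :
      ∀ x ∈ Finset.univ.filter (fun x => p x = i),
        h (p x) * ((-(f x) ^ 2 / 2 + f x * ε) * μ x)
          = h i * ((-(f x) ^ 2 / 2 + f x * ε) * μ x)),
      ← Finset.mul_sum]
    field_simp
  rw [hLHS]
  -- the mean of h over μ ∘ p is zero
  have hz : ∑ x, h (p x) * μ x = 0 := by
    rw [← fib (fun x => h (p x) * μ x), ← hh]
    refine Finset.sum_congr rfl fun i _ => ?_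
    rw [Finset.sum_mul]
    refine Finset.sum_congr rfl fun x hx => ?_
    rw [(Finset.mem_filter.1 hx).2, mul_comm]
  -- positive part sums
  have hpos : ∑ x, max (h (p x)) 0 * μ x ≤ H := by
    have e1 : ∑ x, max (h (p x)) 0 * μ x
        = ∑ x, h (p x) * μ x + ∑ x, max (-h (p x)) 0 * μ x := by
      rw [← Finset.sum_add_distrib]
      refine Finset.sum_congr rfl fun x _ => ?_
      have : max (h (p x)) 0 = h (p x) + max (-h (p x)) 0 := by
        rcases le_total (h (p x)) 0 with hc | hc
        · simp [max_eq_right hc, max_eq_left (neg_nonneg.2 hc)]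
        · simp [max_eq_left hc, max_eq_right (neg_nonpos.2 hc)]
      rw [this, add_mul]
    rw [e1, hz, zero_add]
    calc ∑ x, max (-h (p x)) 0 * μ x ≤ ∑ x, H * μ x :=
          Finset.sum_le_sum fun x _ =>
            mul_le_mul_of_nonneg_right (hHle (p x)) (hμ x).le
      _ = H := by rw [← Finset.mul_sum, hsum, mul_one]
  have hneg : ∑ x, max (-h (p x)) 0 * μ x ≤ H := by
    calc ∑ x, max (-h (p x)) 0 * μ x ≤ ∑ x, H * μ x :=
          Finset.sum_le_sum fun x _ =>
            mul_le_mul_of_nonneg_right (hHle (p x)) (hμ x).le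
      _ = H := by rw [← Finset.mul_sum, hsum, mul_one]
  -- Cauchy-Schwarz : ∑ |f| μ ≤ √ε
  have hCS : ∑ x, |f x| * μ x ≤ Real.sqrt ε := by
    rw [Real.le_sqrt (Finset.sum_nonneg fun x _ =>
      mul_nonneg (abs_nonneg _) (hμ x).le) hε0]
    have : ∑ x, |f x| * μ x
        = ∑ x, (|f x| * Real.sqrt (μ x)) * Real.sqrt (μ x) := by
      refine Finset.sum_congr rfl fun x _ => ?_
      rw [mul_assoc, Real.mul_self_sqrt (hμ x).le]
    rw [this]
    calc (∑ x, (|f x| * Real.sqrt (μ x)) * Real.sqrt (μ x)) ^ 2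
        ≤ (∑ x, (|f x| * Real.sqrt (μ x)) ^ 2) * ∑ x, Real.sqrt (μ x) ^ 2 :=
          Finset.sum_mul_sq_le_sq_mul_sq _ _ _
      _ = ε := by
          have e2 : ∀ x : S, (|f x| * Real.sqrt (μ x)) ^ 2 = f x ^ 2 * μ x := by
            intro x
            rw [mul_pow, Real.sq_sqrt (hμ x).le, sq_abs]
          have e3 : ∀ x : S, Real.sqrt (μ x) ^ 2 = μ x := fun x =>
            Real.sq_sqrt (hμ x).le
          simp_rw [e2, e3, hε, hsum, mul_one]
  -- bound the quadratic part
  have hquad : ∑ x, max (-h (p x)) 0 * (f x ^ 2 * μ x) ≤ H * ε := by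
    calc ∑ x, max (-h (p x)) 0 * (f x ^ 2 * μ x)
        ≤ ∑ x, H * (f x ^ 2 * μ x) :=
          Finset.sum_le_sum fun x _ =>
            mul_le_mul_of_nonneg_right (hHle (p x))
              (mul_nonneg (sq_nonneg _) (hμ x).le)
      _ = H * ε := by rw [← Finset.mul_sum, hε]
  have habs : ∑ x, max (-h (p x)) 0 * (|f x| * μ x) ≤ H * Real.sqrt ε := by
    calc ∑ x, max (-h (p x)) 0 * (|f x| * μ x)
        ≤ ∑ x, H * (|f x| * μ x) :=
          Finset.sum_le_sum fun x _ =>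
            mul_le_mul_of_nonneg_right (hHle (p x))
              (mul_nonneg (abs_nonneg _) (hμ x).le)
      _ = H * ∑ x, |f x| * μ x := by rw [Finset.mul_sum]
      _ ≤ H * Real.sqrt ε := mul_le_mul_of_nonneg_left hCS hH0
  -- pointwise bound
  have hpt : ∀ x : S, h (p x) * ((-(f x) ^ 2 / 2 + f x * ε) * μ x)
      ≤ max (h (p x)) 0 * (ε ^ 2 / 2) * μ x
        + max (-h (p x)) 0 * (f x ^ 2 * μ x) / 2
        + ε * (max (-h (p x)) 0 * (|f x| * μ x)) := by
    intro x
    have ha1 : 0 ≤ max (h (p x)) 0 := le_max_right _ _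
    have ha2 : 0 ≤ max (-h (p x)) 0 := le_max_right _ _
    have ha3 : max (h (p x)) 0 - max (-h (p x)) 0 = h (p x) := by
      rcases le_total (h (p x)) 0 with hc | hc
      · simp [max_eq_right hc, max_eq_left (neg_nonneg.2 hc)]
      · simp [max_eq_left hc, max_eq_right (neg_nonpos.2 hc)]
    have hb1 : -f x ≤ |f x| := neg_le_abs _
    have hμx := (hμ x).le
    have hfplus : (0:ℝ) ≤ |f x| + f x := by linarith
    have hscal : h (p x) * (-(f x) ^ 2 / 2 + f x * ε)
        ≤ max (h (p x)) 0 * (ε ^ 2 / 2) + max (-h (p x)) 0 * (f x ^ 2) / 2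
          + ε * (max (-h (p x)) 0 * |f x|) := by
      nlinarith [mul_nonneg ha1 (sq_nonneg (f x - ε)),
        mul_nonneg ha2 (mul_nonneg hε0 hfplus)]
    nlinarith [mul_le_mul_of_nonneg_right hscal hμx]
  -- sum the pointwise bound
  have hsumpt : ∑ x, h (p x) * ((-(f x) ^ 2 / 2 + f x * ε) * μ x)
      ≤ H * (ε ^ 2 / 2) + H * ε / 2 + ε * (H * Real.sqrt ε) := by
    calc ∑ x, h (p x) * ((-(f x) ^ 2 / 2 + f x * ε) * μ x)
        ≤ ∑ x, (max (h (p x)) 0 * (ε ^ 2 / 2) * μ x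
            + max (-h (p x)) 0 * (f x ^ 2 * μ x) / 2
            + ε * (max (-h (p x)) 0 * (|f x| * μ x))) :=
          Finset.sum_le_sum fun x _ => hpt x
      _ = (ε ^ 2 / 2) * ∑ x, max (h (p x)) 0 * μ x
          + (∑ x, max (-h (p x)) 0 * (f x ^ 2 * μ x)) / 2
          + ε * ∑ x, max (-h (p x)) 0 * (|f x| * μ x) := by
          have e : ∀ x : S, max (h (p x)) 0 * (ε ^ 2 / 2) * μ x
              = ε ^ 2 / 2 * (max (h (p x)) 0 * μ x) := fun x => by ring
          simp_rw [e]
          rw [Finset.sum_add_distrib, Finset.sum_add_distrib, ← Finset.sum_div,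
            ← Finset.mul_sum, ← Finset.mul_sum]
      _ ≤ H * (ε ^ 2 / 2) + H * ε / 2 + ε * (H * Real.sqrt ε) := by
          have t1 : (ε ^ 2 / 2) * ∑ x, max (h (p x)) 0 * μ x ≤ H * (ε ^ 2 / 2) := by
            rw [mul_comm]
            exact mul_le_mul_of_nonneg_right hpos (by positivity)
          have t2 : (∑ x, max (-h (p x)) 0 * (f x ^ 2 * μ x)) / 2 ≤ H * ε / 2 := by
            linarith
          have t3 : ε * ∑ x, max (-h (p x)) 0 * (|f x| * μ x)
              ≤ ε * (H * Real.sqrt ε) := mul_le_mul_of_nonneg_left habs hε0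
          linarith
  refine hsumpt.trans ?_
  have hs := Real.sqrt_nonneg ε
  have hs2 : Real.sqrt ε ^ 2 = ε := Real.sq_sqrt hε0
  nlinarith [mul_nonneg hH0 hε0, mul_nonneg (mul_nonneg hH0 hε0) hs,
    mul_nonneg (mul_nonneg hH0 hε0) hε0]
end
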